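/- The first-order theory of the structure ⟨ℤ; +⟩ of integers with addition is not finitely axiomatizable: there is no L_+-sentence φ such that for every nonempty L_+-structure M, M satisfies φ if and only if M is a model of the complete theory of ⟨ℤ; +⟩. -/

import Mathlib

open FirstOrder Language

/-- The language `L_+` with exactly one binary function symbol and no other symbols. -/
inductive AddFunc : ℕ → Type
  | add : AddFunc 2

/-- The language `L_+`. -/
def Ladd : Language := ⟨AddFunc, fun _ => Empty⟩

/-- `ℤ` as an `L_+`-structure, interpreting the binary function symbol as addition. -/
instance : Ladd.Structure ℤ where
  funMap | .add => fun v => v 0 + v 1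
  RelMap := fun {_} r _ => Empty.elim r

/-!
A sentence of `L_+` cannot tell `ℤ` from `ℤ × ZMod p` once the prime `p` is large compared with
the coefficients occurring in it. This is an Ehrenfeucht–Fraïssé argument: tuples `v` in `ℤ` and
`w` in `ℤ × ZMod p` are matched when they satisfy the same linear relations with coefficients of
`ℓ¹`-norm at most `N` and `w ≡ v` modulo `N !` in the first coordinate. A new element on one side
satisfying a small relation `c₀ • x = ∑ cᵢ • vᵢ` is answered by a solution of the same relation on
the other side (`c₀` divides `N !` and is a unit modulo `p`); one satisfying none is answered by
an element too large to satisfy any. Each quantifier squares the admissible norm. Since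
`ℤ × ZMod p` has `p`-torsion, which a sentence of `L_+` detects, it is not a model of the theory
of `ℤ`, yet for large `p` it satisfies any single sentence true in `ℤ`.
-/

namespace IntAdd

open Nat

class IsAddStructure (M : Type) [Add M] [Ladd.Structure M] : Prop where
  funMap_add (v : Fin 2 → M) : Structure.funMap (L := Ladd) AddFunc.add v = v 0 + v 1

instance : IsAddStructure ℤ := ⟨fun _ => rfl⟩

instance (p : ℕ) : Ladd.Structure (ℤ × ZMod p) where
  funMap | .add => fun v => v 0 + v 1
  RelMap := fun {_} r _ => Empty.elim r

instance (p : ℕ) : IsAddStructure (ℤ × ZMod p) := ⟨fun _ => rfl⟩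

def addTerm {α : Type} (t₁ t₂ : Ladd.Term α) : Ladd.Term α :=
  Functions.apply₂ (L := Ladd) AddFunc.add t₁ t₂

section Realize

variable {M : Type} [AddCommGroup M] [Ladd.Structure M] [IsAddStructure M]

@[simp]
theorem realize_addTerm {α : Type} (t₁ t₂ : Ladd.Term α) (x : α → M) :
    (addTerm t₁ t₂).realize x = t₁.realize x + t₂.realize x :=
  IsAddStructure.funMap_add _

def termCoeff {n : ℕ} : Ladd.Term (Empty ⊕ Fin n) → Fin n → ℤ
  | .var (.inl e) => e.elim
  | .var (.inr i) => Pi.single i 1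
  | .func .add ts => termCoeff (ts 0) + termCoeff (ts 1)

theorem realize_eq_sum_termCoeff {n : ℕ} (t : Ladd.Term (Empty ⊕ Fin n)) (e : Empty → M)
    (x : Fin n → M) : t.realize (Sum.elim e x) = ∑ i, termCoeff t i • x i := by
  induction t with
  | var a =>
    rcases a with e | i
    · exact e.elim
    · simp [termCoeff, Pi.single_apply]
  | func f ts ih =>
    cases f
    simp [Term.realize, IsAddStructure.funMap_add, ih, termCoeff, add_smul,
      Finset.sum_add_distrib]

theorem realize_equal_iff {n : ℕ} (t₁ t₂ : Ladd.Term (Empty ⊕ Fin n)) (e : Empty → M)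
    (x : Fin n → M) :
    (BoundedFormula.equal t₁ t₂).Realize e x ↔
      ∑ i, (termCoeff t₁ - termCoeff t₂) i • x i = 0 := by
  simp only [BoundedFormula.Realize, realize_eq_sum_termCoeff, Pi.sub_apply, sub_smul,
    Finset.sum_sub_distrib, sub_eq_zero]

end Realize

def succNsmulTerm {α : Type} : ℕ → Ladd.Term α → Ladd.Term α
  | 0, t => t
  | k + 1, t => addTerm t (succNsmulTerm k t)

section Torsion

variable {M : Type} [AddCommGroup M] [Ladd.Structure M] [IsAddStructure M]

@[simp]
theorem realize_succNsmulTerm {α : Type} (k : ℕ) (t : Ladd.Term α) (x : α → M) :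
    (succNsmulTerm k t).realize x = (k + 1) • t.realize x := by
  induction k with
  | zero => simp [succNsmulTerm]
  | succ k ih => rw [succNsmulTerm, realize_addTerm, ih, succ_nsmul' _ (k + 1)]

/-- `L_+` has no constant `0`: `p • x = 0` is written `(p + 1) • x = x`, and `x = 0` as
`x + x = x`. -/
def noTorsionSentence (p : ℕ) : Ladd.Sentence :=
  ∀' (succNsmulTerm p &0 =' &0 ⟹ addTerm &0 &0 =' &0)

theorem realize_noTorsionSentence_iff (p : ℕ) :
    M ⊨ noTorsionSentence p ↔ ∀ a : M, p • a = 0 → a = 0 := by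
  simp [noTorsionSentence, Sentence.Realize, Formula.Realize, succ_nsmul, Fin.snoc]

end Torsion

theorem int_realize_noTorsionSentence {p : ℕ} (hp : p ≠ 0) : ℤ ⊨ noTorsionSentence p :=
  (realize_noTorsionSentence_iff p).2 fun _ h => (smul_eq_zero.1 h).resolve_left hp

theorem prod_not_realize_noTorsionSentence {p : ℕ} (hp : 1 < p) :
    ¬ (ℤ × ZMod p) ⊨ noTorsionSentence p := by
  have : Fact (1 < p) := ⟨hp⟩
  rw [realize_noTorsionSentence_iff]
  intro h
  simpa using h (0, 1) (by simp)

section Arithmetic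

variable {n : ℕ}

def coeffNorm (c : Fin n → ℤ) : ℕ := ∑ i, (c i).natAbs

theorem coeffNorm_eq_init_add_last (d : Fin (n + 1) → ℤ) :
    coeffNorm d = coeffNorm (Fin.init d) + (d (Fin.last n)).natAbs :=
  Fin.sum_univ_castSucc _

theorem coeffNorm_mul_sub_mul_le (a b : ℤ) (c d : Fin n → ℤ) :
    coeffNorm (fun i => a * c i - b * d i) ≤ a.natAbs * coeffNorm c + b.natAbs * coeffNorm d := by
  simp only [coeffNorm, Finset.mul_sum, ← Finset.sum_add_distrib]
  refine Finset.sum_le_sum fun i _ => ?_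
  rw [← Int.natAbs_mul, ← Int.natAbs_mul]
  exact Int.natAbs_sub_le _ _

theorem abs_sum_mul_le (c u : Fin n → ℤ) :
    |∑ i, c i * u i| ≤ (coeffNorm c : ℤ) * ∑ i, |u i| := by
  have hu : ∀ i, |u i| ≤ ∑ j, |u j| := fun i =>
    Finset.single_le_sum (f := fun j => |u j|) (fun _ _ => abs_nonneg _) (Finset.mem_univ i)
  calc |∑ i, c i * u i| ≤ ∑ i, |c i| * |u i| := by
        simpa only [abs_mul] using Finset.abs_sum_le_sum_abs (fun i => c i * u i) Finset.univ
    _ ≤ ∑ i, |c i| * ∑ j, |u j| :=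
        Finset.sum_le_sum fun i _ => mul_le_mul_of_nonneg_left (hu i) (abs_nonneg _)
    _ = coeffNorm c * ∑ i, |u i| := by simp [coeffNorm, Finset.sum_mul]

theorem sum_smul_snoc {M : Type} [AddCommGroup M] (d : Fin (n + 1) → ℤ) (v : Fin n → M)
    (a : M) :
    ∑ i, d i • Fin.snoc (α := fun _ => M) v a i =
      ∑ i, Fin.init d i • v i + d (Fin.last n) • a := by
  simp [Fin.sum_univ_castSucc, Fin.init]

theorem smul_eq_sum_iff_sum_eq_zero {M : Type} [AddCommGroup M] {u : Fin n → M} {x : M}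
    {c₀ d₀ : ℤ} {c d : Fin n → ℤ} (hc₀ : ∀ y : M, c₀ • y = 0 → y = 0)
    (hx : c₀ • x = ∑ i, c i • u i) :
    d₀ • x = ∑ i, d i • u i ↔ ∑ i, (d₀ * c i - c₀ * d i) • u i = 0 := by
  have : ∑ i, (d₀ * c i - c₀ * d i) • u i = c₀ • (d₀ • x - ∑ i, d i • u i) := by
    simp only [sub_smul, mul_smul, Finset.sum_sub_distrib, ← Finset.smul_sum, ← hx, smul_sub,
      smul_comm d₀ c₀ x]
  rw [this]
  exact ⟨fun h => by rw [sub_eq_zero.2 h, smul_zero], fun h => sub_eq_zero.1 (hc₀ _ h)⟩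

theorem exists_mul_eq_of_dvd_sub {c₀ x S T m : ℤ} (hx : c₀ * x = S) (h : c₀ * m ∣ T - S) :
    ∃ y, c₀ * y = T ∧ m ∣ y - x := by
  obtain ⟨k, hk⟩ := h
  exact ⟨x + m * k, by linear_combination hx - hk, ⟨k, by ring⟩⟩

theorem mul_factorial_dvd_factorial {c₀ : ℤ} {B N : ℕ} (hc₀ : c₀ ≠ 0) (hc : c₀.natAbs ≤ B)
    (hBN : 2 * B ≤ N) : c₀ * (B ! : ℤ) ∣ (N ! : ℤ) := by
  have h : c₀.natAbs * B ! ∣ N ! :=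
    (Nat.mul_dvd_mul_right (Nat.dvd_factorial (Int.natAbs_pos.2 hc₀) hc) _).trans <|
      (Nat.factorial_mul_factorial_dvd_factorial_add B B).trans
        (Nat.factorial_dvd_factorial (by omega))
  rw [← Int.natAbs_dvd_natAbs]
  simpa [Int.natAbs_mul] using h

theorem exists_dvd_sub_forall_mul_ne_sum (u : Fin n → ℤ) (r : ℤ) {m : ℤ} (hm : m ≠ 0) (B : ℕ) :
    ∃ a, m ∣ a - r ∧ ∀ c₀ c, c₀ ≠ 0 → coeffNorm c ≤ B → c₀ * a ≠ ∑ i, c i * u i := by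
  set K := (B : ℤ) * ∑ i, |u i|
  have hK : 0 ≤ K := by positivity
  have hm2 : 1 ≤ m * m := by nlinarith [mul_self_pos.2 hm]
  refine ⟨r + m * (m * (K + |r| + 1)), ⟨m * (K + |r| + 1), by ring⟩, fun c₀ c hc₀ hc h => ?_⟩
  have hlarge : K < |c₀ * (r + m * (m * (K + |r| + 1)))| := by
    have hpos : 0 ≤ (m * m - 1) * (K + |r| + 1) := mul_nonneg (by omega) (by positivity)
    rw [abs_mul]
    refine lt_of_lt_of_le ?_ (le_mul_of_one_le_left (abs_nonneg _) (Int.one_le_abs hc₀))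
    refine lt_of_lt_of_le ?_ (le_abs_self _)
    nlinarith [neg_abs_le r]
  have hsmall : |∑ i, c i * u i| ≤ K := (abs_sum_mul_le c u).trans <|
    mul_le_mul_of_nonneg_right (by exact_mod_cast hc) (Finset.sum_nonneg fun _ _ => abs_nonneg _)
  rw [h] at hlarge
  exact absurd hsmall (not_le.2 hlarge)

theorem intCast_zmod_ne_zero {p : ℕ} {c : ℤ} (hc : c ≠ 0) (hcp : c.natAbs < p) :
    (c : ZMod p) ≠ 0 := by
  rw [Ne, ZMod.intCast_zmod_eq_zero_iff_dvd, ← Int.natAbs_dvd_natAbs]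
  exact fun h => absurd (Nat.le_of_dvd (Int.natAbs_pos.2 hc) h) (by simpa using hcp.not_ge)

theorem eq_zero_of_zsmul_eq_zero {p : ℕ} [Fact p.Prime] {c : ℤ} (hc : c ≠ 0) (hcp : c.natAbs < p)
    {x : ℤ × ZMod p} (h : c • x = 0) : x = 0 := by
  have h₁ : c * x.1 = 0 := by simpa using congrArg Prod.fst h
  have h₂ : (c : ZMod p) * x.2 = 0 := by simpa [zsmul_eq_mul] using congrArg Prod.snd h
  exact Prod.ext ((mul_eq_zero.1 h₁).resolve_left hc)
    ((mul_eq_zero.1 h₂).resolve_left (intCast_zmod_ne_zero hc hcp))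

end Arithmetic

/-- The congruence modulo `N !` is what lets divisibility by a small coefficient pass from one
side to the other when a tuple is extended. -/
def AgreeUpTo (p N : ℕ) {n : ℕ} (v : Fin n → ℤ) (w : Fin n → ℤ × ZMod p) : Prop :=
  (∀ c : Fin n → ℤ, coeffNorm c ≤ N → (∑ i, c i • v i = 0 ↔ ∑ i, c i • w i = 0)) ∧
    ∀ i, (N ! : ℤ) ∣ (w i).1 - v i

theorem agreeUpTo_elim0 (p N : ℕ) (v : Fin 0 → ℤ) (w : Fin 0 → ℤ × ZMod p) :
    AgreeUpTo p N v w :=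
  ⟨fun _ _ => by simp, finZeroElim⟩

namespace AgreeUpTo

variable {p N B n : ℕ} {v : Fin n → ℤ} {w : Fin n → ℤ × ZMod p}

theorem dvd_sum_sub (h : AgreeUpTo p N v w) (c : Fin n → ℤ) :
    (N ! : ℤ) ∣ ∑ i, c i * (w i).1 - ∑ i, c i * v i := by
  rw [← Finset.sum_sub_distrib]
  exact Finset.dvd_sum fun i _ => by rw [← mul_sub]; exact dvd_mul_of_dvd_right (h.2 i) _

theorem snoc (h : AgreeUpTo p N v w) (hBN : B ≤ N) {a : ℤ} {b : ℤ × ZMod p}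
    (hab : ∀ (c₀ : ℤ) c, c₀ ≠ 0 → c₀.natAbs + coeffNorm c ≤ B →
      (c₀ • a = ∑ i, c i • v i ↔ c₀ • b = ∑ i, c i • w i))
    (hcong : (B ! : ℤ) ∣ b.1 - a) :
    AgreeUpTo p B (Fin.snoc v a) (Fin.snoc w b) := by
  have hfac : (B ! : ℤ) ∣ N ! := Int.natCast_dvd_natCast.2 (Nat.factorial_dvd_factorial hBN)
  refine ⟨fun d hd => ?_, Fin.lastCases (by simpa using hcong) fun i => by
    simpa using hfac.trans (h.2 i)⟩
  rw [coeffNorm_eq_init_add_last] at hd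
  rw [sum_smul_snoc, sum_smul_snoc]
  by_cases hd₀ : d (Fin.last n) = 0
  · simpa [hd₀] using h.1 _ (by omega)
  · have := hab (-d (Fin.last n)) (Fin.init d) (neg_ne_zero.2 hd₀) (by rw [Int.natAbs_neg]; omega)
    rw [neg_smul, neg_smul] at this
    rw [add_eq_zero_iff_neg_eq', add_eq_zero_iff_neg_eq']
    exact this

theorem smul_eq_sum_iff [Fact p.Prime] (h : AgreeUpTo p N v w) (hBN : 2 * B ^ 2 ≤ N)
    (hNp : N < p) {a : ℤ} {b : ℤ × ZMod p} {c₀ d₀ : ℤ} {c d : Fin n → ℤ} (hc₀ : c₀ ≠ 0)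
    (hc : c₀.natAbs + coeffNorm c ≤ B) (ha : c₀ • a = ∑ i, c i • v i)
    (hb : c₀ • b = ∑ i, c i • w i) (hd : d₀.natAbs + coeffNorm d ≤ B) :
    d₀ • a = ∑ i, d i • v i ↔ d₀ • b = ∑ i, d i • w i := by
  have hnorm := coeffNorm_mul_sub_mul_le d₀ c₀ c d
  rw [smul_eq_sum_iff_sum_eq_zero (fun _ hy => (smul_eq_zero.1 hy).resolve_left hc₀) ha,
    smul_eq_sum_iff_sum_eq_zero (fun _ hy => eq_zero_of_zsmul_eq_zero hc₀ (by nlinarith) hy) hb]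
  have h₁ : d₀.natAbs * coeffNorm c ≤ B * B := Nat.mul_le_mul (by omega) (by omega)
  have h₂ : c₀.natAbs * coeffNorm d ≤ B * B := Nat.mul_le_mul (by omega) (by omega)
  exact h.1 _ (by nlinarith)

theorem exists_snoc_left [Fact p.Prime] (h : AgreeUpTo p N v w) (hBN : 2 * B ^ 2 ≤ N)
    (hNp : N < p) (b : ℤ × ZMod p) : ∃ a : ℤ, AgreeUpTo p B (Fin.snoc v a) (Fin.snoc w b) := by
  have hB : B ≤ N := le_trans (by nlinarith) hBN
  by_cases hrel : ∃ (c₀ : ℤ) (c : Fin n → ℤ),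
      c₀ ≠ 0 ∧ c₀.natAbs + coeffNorm c ≤ B ∧ c₀ • b = ∑ i, c i • w i
  · obtain ⟨c₀, c, hc₀, hc, hb⟩ := hrel
    have hb₁ : c₀ * b.1 = ∑ i, c i * (w i).1 := by simpa [Prod.fst_sum] using congrArg Prod.fst hb
    obtain ⟨a, ha, hcong⟩ := exists_mul_eq_of_dvd_sub hb₁ <|
      (mul_factorial_dvd_factorial (B := B) (N := N) hc₀ (by omega) (by nlinarith)).trans
        (dvd_sub_comm.1 (h.dvd_sum_sub c))
    refine ⟨a, h.snoc hB (fun d₀ d _ hd => h.smul_eq_sum_iff hBN hNp hc₀ hc ?_ hb hd)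
      (dvd_sub_comm.1 hcong)⟩
    simpa using ha
  · push Not at hrel
    obtain ⟨a, hcong, hlarge⟩ :=
      exists_dvd_sub_forall_mul_ne_sum v b.1 (Int.natCast_ne_zero.2 B.factorial_ne_zero) B
    refine ⟨a, h.snoc hB (fun c₀ c hc₀ hc => iff_of_false ?_ (hrel c₀ c hc₀ hc))
      (dvd_sub_comm.1 hcong)⟩
    simpa using hlarge c₀ c hc₀ (by omega)

theorem exists_snoc_right [Fact p.Prime] (h : AgreeUpTo p N v w) (hBN : 2 * B ^ 2 ≤ N)
    (hNp : N < p) (a : ℤ) : ∃ b : ℤ × ZMod p, AgreeUpTo p B (Fin.snoc v a) (Fin.snoc w b) := by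
  have hB : B ≤ N := le_trans (by nlinarith) hBN
  by_cases hrel : ∃ (c₀ : ℤ) (c : Fin n → ℤ),
      c₀ ≠ 0 ∧ c₀.natAbs + coeffNorm c ≤ B ∧ c₀ • a = ∑ i, c i • v i
  · obtain ⟨c₀, c, hc₀, hc, ha⟩ := hrel
    obtain ⟨b₁, hb₁, hcong⟩ := exists_mul_eq_of_dvd_sub (by simpa using ha) <|
      (mul_factorial_dvd_factorial (B := B) (N := N) hc₀ (by omega) (by nlinarith)).trans
        (h.dvd_sum_sub c)
    have hc₀p : (c₀ : ZMod p) ≠ 0 := intCast_zmod_ne_zero hc₀ (by omega)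
    let b : ℤ × ZMod p := (b₁, (c₀ : ZMod p)⁻¹ * ∑ i, c i • (w i).2)
    have hb : c₀ • b = ∑ i, c i • w i := Prod.ext (by simpa [b, Prod.fst_sum] using hb₁)
      (by simp [b, Prod.snd_sum, zsmul_eq_mul, mul_inv_cancel_left₀ hc₀p])
    exact ⟨b, h.snoc hB (fun d₀ d _ hd => h.smul_eq_sum_iff hBN hNp hc₀ hc ha hb hd) hcong⟩
  · push Not at hrel
    obtain ⟨b₁, hcong, hlarge⟩ := exists_dvd_sub_forall_mul_ne_sum (fun i => (w i).1) a
      (Int.natCast_ne_zero.2 B.factorial_ne_zero) B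
    refine ⟨(b₁, 0), h.snoc hB (fun c₀ c hc₀ hc => iff_of_false (hrel c₀ c hc₀ hc) fun hb => ?_)
      hcong⟩
    exact hlarge c₀ c hc₀ (by omega) (by simpa [Prod.fst_sum] using congrArg Prod.fst hb)

end AgreeUpTo

/-- The extension step combines two relations of norm `B` into one of norm `2 * B ^ 2`, hence
the squaring at each quantifier. -/
def coeffBound : ∀ {n : ℕ}, Ladd.BoundedFormula Empty n → ℕ
  | _, .falsum => 0
  | _, .equal t₁ t₂ => coeffNorm (termCoeff t₁ - termCoeff t₂)
  | _, .rel _ _ => 0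
  | _, .imp θ ψ => max (coeffBound θ) (coeffBound ψ)
  | _, .all θ => 2 * coeffBound θ ^ 2

theorem AgreeUpTo.realize_iff {p : ℕ} [Fact p.Prime] {n N : ℕ} (θ : Ladd.BoundedFormula Empty n)
    (hθ : coeffBound θ ≤ N) (hNp : N < p) {v : Fin n → ℤ} {w : Fin n → ℤ × ZMod p}
    (h : AgreeUpTo p N v w) (e : Empty → ℤ) (e' : Empty → ℤ × ZMod p) :
    θ.Realize e v ↔ θ.Realize e' w := by
  induction θ generalizing N with
  | falsum => exact Iff.rfl
  | equal t₁ t₂ =>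
    rw [realize_equal_iff, realize_equal_iff]
    exact h.1 _ hθ
  | rel R => exact (R : Empty).elim
  | imp θ ψ ihθ ihψ =>
    simp only [BoundedFormula.realize_imp]
    exact imp_congr (ihθ (le_of_max_le_left hθ) hNp h) (ihψ (le_of_max_le_right hθ) hNp h)
  | all θ ih =>
    replace hθ : 2 * coeffBound θ ^ 2 ≤ N := hθ
    have hθp : coeffBound θ < p := by nlinarith
    simp only [BoundedFormula.realize_all]
    refine ⟨fun H b => ?_, fun H a => ?_⟩
    · obtain ⟨a, ha⟩ := h.exists_snoc_left hθ hNp b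
      exact (ih le_rfl hθp ha).1 (H a)
    · obtain ⟨b, hb⟩ := h.exists_snoc_right hθ hNp a
      exact (ih le_rfl hθp hb).2 (H b)

theorem realize_int_iff_realize_prod {p : ℕ} [Fact p.Prime] (θ : Ladd.Sentence)
    (hθ : coeffBound θ < p) : ℤ ⊨ θ ↔ (ℤ × ZMod p) ⊨ θ :=
  (agreeUpTo_elim0 p _ _ _).realize_iff θ le_rfl hθ _ _

end IntAdd

/-- **The theory of `⟨ℤ; +⟩` is not finitely axiomatizable**: there is no single
`L_+`-sentence whose models (among nonempty `L_+`-structures) are exactly the models of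
the complete theory of `⟨ℤ; +⟩`. -/
theorem Int_add_not_finitely_axiomatizable :
    ¬ ∃ φ : Ladd.Sentence,
      ∀ (M : Type) [Nonempty M] [Ladd.Structure M],
        (M ⊨ φ ↔ M ⊨ Ladd.completeTheory ℤ) := by
  rintro ⟨φ, hφ⟩
  obtain ⟨p, hφp, hp⟩ := Nat.exists_infinite_primes (IntAdd.coeffBound φ + 1)
  have : Fact p.Prime := ⟨hp⟩
  have hZ : (ℤ × ZMod p) ⊨ Ladd.completeTheory ℤ :=
    (hφ _).1 ((IntAdd.realize_int_iff_realize_prod φ hφp).1 ((hφ ℤ).2 inferInstance))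
  exact IntAdd.prod_not_realize_noTorsionSentence hp.one_lt
    ((realize_iff_of_model_completeTheory ℤ _ _).2
      (IntAdd.int_realize_noTorsionSentence hp.ne_zero))
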